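/- arXiv:1604.00654 — 2 statements merged into one kernel-verified Lean document; each statement's English description precedes it below -/
import Mathlib

section
/- Let G be a graph whose vertices can be labeled w_1,...,w_h, z_1,...,z_h such that: (i) {w_1,...,w_h} is a vertex cover; (ii) {w_i,z_i} ∈ E(G) for all i; (iii) if {y_i,w_j} and {z_j,w_l} ∈ E(G) with i,j,l distinct and y_i ∈ {w_i,z_i}, then {y_i,w_l} ∈ E(G); (iv) if {w_i,z_j} ∈ E(G) then {w_i,w_j} ∉ E(G). Then for the graph G_k (k ≥ 1), the following analogue of condition (iii) holds: for distinct indices i,j,l of the relabeled cover vertices a_1,...,a_{kh} and independent vertices b_1,...,b_{kh} of G_k, if {a_i,a_j} and {b_j,a_l} are edges of G_k, then {a_i,a_l} is an edge of G_k. -/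
/-- The graph `G_k`. -/
def graphPower {V : Type*} (G : SimpleGraph V) (k : ℕ) : SimpleGraph (V × Fin k) where
  Adj a b := G.Adj a.1 b.1 ∧ a.2.val + b.2.val + 2 ≤ k + 1
  symm := ⟨by rintro a b ⟨h1, h2⟩; exact ⟨h1.symm, by omega⟩⟩
  loopless := ⟨by rintro a ⟨h1, _⟩; exact G.loopless.irrefl a.1 h1⟩

/- With 1-indexed copies this reads: `p + r ≤ k + 1` and `(k + 1 - r) + t ≤ k + 1`
give `p + t ≤ k + 1`. -/
lemma Fin.val_add_val_add_two_le_of_rev {k : ℕ} {p r t : Fin k}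
    (hpr : p.val + r.val + 2 ≤ k + 1) (hrt : k - 1 - r.val + t.val + 2 ≤ k + 1) :
    p.val + t.val + 2 ≤ k + 1 := by
  have := r.isLt
  omega

lemma SimpleGraph.adj_inl_of_adj_inl_of_adj_inr {ι : Type*} {G : SimpleGraph (ι ⊕ ι)}
    (hiii : ∀ i j l : ι, i ≠ j → j ≠ l → i ≠ l →
      G.Adj (.inl i) (.inl j) → G.Adj (.inr j) (.inl l) → G.Adj (.inl i) (.inl l))
    (hiv : ∀ i j : ι, G.Adj (.inl i) (.inr j) → ¬ G.Adj (.inl i) (.inl j))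
    {m q s : ι} (hmq : G.Adj (.inl m) (.inl q)) (hqs : G.Adj (.inr q) (.inl s)) :
    G.Adj (.inl m) (.inl s) := by
  obtain rfl | hms := eq_or_ne m s
  · exact absurd hmq (hiv m q hqs.symm)
  obtain rfl | hqs' := eq_or_ne q s
  · exact hmq
  exact hiii m q s (fun h ↦ G.loopless.irrefl _ (h ▸ hmq)) hqs' hms hmq hqs

/-- Vertices of `G` are `w_1,…,w_h` (encoded `Sum.inl`) and `z_1,…,z_h` (encoded
`Sum.inr`); copies are 0-indexed, so `b_j = z_{q, k+1-r}` is copy `k-1-r` of `z_q`. -/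
theorem stmt3 (h k : ℕ) (G : SimpleGraph (Fin h ⊕ Fin h))
    -- (iii)
    (hiii : ∀ i j l : Fin h, i ≠ j → j ≠ l → i ≠ l →
      ∀ y : Fin h ⊕ Fin h, (y = Sum.inl i ∨ y = Sum.inr i) →
      G.Adj y (Sum.inl j) → G.Adj (Sum.inr j) (Sum.inl l) → G.Adj y (Sum.inl l))
    -- (iv)
    (hiv : ∀ i j : Fin h, G.Adj (Sum.inl i) (Sum.inr j) → ¬ G.Adj (Sum.inl i) (Sum.inl j))
    (m q s : Fin h) (p r t : Fin k)
    (e1 : (graphPower G k).Adj (Sum.inl m, p) (Sum.inl q, r))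
    (e2 : (graphPower G k).Adj
      (Sum.inr q, ⟨k - 1 - r.val, by have := r.2; omega⟩) (Sum.inl s, t)) :
    (graphPower G k).Adj (Sum.inl m, p) (Sum.inl s, t) := by
  obtain ⟨hmq, hpr⟩ := e1
  obtain ⟨hqs, hrt⟩ := e2
  refine ⟨?_, Fin.val_add_val_add_two_le_of_rev hpr hrt⟩
  exact SimpleGraph.adj_inl_of_adj_inl_of_adj_inr
    (fun i j l hij hjl hil ↦ hiii i j l hij hjl hil _ (.inl rfl)) hiv hmq hqs
end

section
/- Let G be a bipartite graph with bipartition X = {x_1,...,x_s}, Y = {y_1,...,y_t}, with no isolated vertices, and let k ≥ 2. In the graph G_k, the set F = {x_{i,j} : 1 ≤ i ≤ s, 2 ≤ j ≤ k} is an independent set, and its closed neighborhood is N_{G_k}[F] = F ∪ {y_{i,j} : 1 ≤ i ≤ t, 1 ≤ j ≤ k−1}. Consequently, the graph G_k \ N_{G_k}[F] is isomorphic to G. -/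
/-- `A` is an independent set of `G`. -/
def IsIndep {V : Type*} (G : SimpleGraph V) (A : Set V) : Prop :=
  ∀ u ∈ A, ∀ v ∈ A, ¬ G.Adj u v

/-- The set `F = {x_{i,j} : x_i ∈ X, 2 ≤ j ≤ k}` (0-indexed: `1 ≤ j`). -/
def Fset {V : Type*} (X : Set V) (k : ℕ) : Set (V × Fin k) :=
  {a | a.1 ∈ X ∧ 1 ≤ a.2.val}

/-- The closed neighborhood of a vertex set `F` in a graph `H`. -/
def closedNbhd {W : Type*} (H : SimpleGraph W) (F : Set W) : Set W :=
  {b | b ∈ F ∨ ∃ a ∈ F, H.Adj a b}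

/-!
Neighbours of `X`-vertices lie in `Y`, and for an `X`-neighbour `x` of `y` the copy `x_{,2}`
reaches every `y_{,q}` with `q ≤ k - 1`; this gives `N[F]`. What survives is one copy of each
vertex, `X` in the first layer and `Y` in the last, i.e. the graph of a layer function, and those
two layers are joined in `G_k` exactly along the edges of `G`.
-/

section Bipartite

variable {V : Type*} {G : SimpleGraph V} {X Y : Set V}

lemma mem_right_of_adj_of_mem_left (hdisj : Disjoint X Y)
    (hbip : ∀ u v : V, G.Adj u v → (u ∈ X ∧ v ∈ Y) ∨ (u ∈ Y ∧ v ∈ X))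
    {u v : V} (h : G.Adj u v) (hu : u ∈ X) : v ∈ Y := by
  rcases hbip u v h with ⟨-, hv⟩ | ⟨huY, -⟩
  · exact hv
  · exact absurd huY (Set.disjoint_left.mp hdisj hu)

lemma mem_left_of_adj_of_mem_right (hdisj : Disjoint X Y)
    (hbip : ∀ u v : V, G.Adj u v → (u ∈ X ∧ v ∈ Y) ∨ (u ∈ Y ∧ v ∈ X))
    {u v : V} (h : G.Adj u v) (hu : u ∈ Y) : v ∈ X := by
  rcases hbip u v h with ⟨huX, -⟩ | ⟨-, hv⟩
  · exact absurd hu (Set.disjoint_left.mp hdisj huX)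
  · exact hv

lemma isIndep_left (hdisj : Disjoint X Y)
    (hbip : ∀ u v : V, G.Adj u v → (u ∈ X ∧ v ∈ Y) ∨ (u ∈ Y ∧ v ∈ X)) : IsIndep G X :=
  fun _ hu _ hv h => Set.disjoint_left.mp hdisj hv (mem_right_of_adj_of_mem_left hdisj hbip h hu)

end Bipartite

section GraphPower

variable {V : Type*} {G : SimpleGraph V} {X Y : Set V} {k : ℕ}

lemma IsIndep.graphPower_fset (hX : IsIndep G X) : IsIndep (graphPower G k) (Fset X k) :=
  fun _ hu _ hv h => hX _ hu.1 _ hv.1 h.1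

lemma closedNbhd_fset (hdisj : Disjoint X Y)
    (hbip : ∀ u v : V, G.Adj u v → (u ∈ X ∧ v ∈ Y) ∨ (u ∈ Y ∧ v ∈ X))
    (hiso : ∀ v : V, ∃ u, G.Adj v u) (hk : 2 ≤ k) :
    closedNbhd (graphPower G k) (Fset X k)
      = Fset X k ∪ {b : V × Fin k | b.1 ∈ Y ∧ b.2.val ≤ k - 2} := by
  ext b
  constructor
  · rintro (hb | ⟨a, ⟨haX, ha1⟩, hadj, hle⟩)
    · exact Or.inl hb
    · exact Or.inr ⟨mem_right_of_adj_of_mem_left hdisj hbip hadj haX, by omega⟩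
  · rintro (hb | ⟨hbY, hble⟩)
    · exact Or.inl hb
    · obtain ⟨u, hu⟩ := hiso b.1
      have huX : u ∈ X := mem_left_of_adj_of_mem_right hdisj hbip hu hbY
      exact Or.inr ⟨(u, ⟨1, by omega⟩), ⟨huX, le_rfl⟩, hu.symm, by simp only; omega⟩

def graphPowerInduceGraphIso (f : V → Fin k)
    (hf : ∀ u v, G.Adj u v → (f u : ℕ) + f v + 1 ≤ k) :
    (graphPower G k).induce {b | b.2 = f b.1} ≃g G where
  toFun b := b.1.1
  invFun v := ⟨(v, f v), rfl⟩
  left_inv := fun ⟨_, hb⟩ => Subtype.ext (Prod.ext rfl hb.symm)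
  right_inv _ := rfl
  map_rel_iff' {a b} := by
    obtain ⟨⟨u, i⟩, rfl : i = f u⟩ := a
    obtain ⟨⟨v, j⟩, rfl : j = f v⟩ := b
    show G.Adj u v ↔ G.Adj u v ∧ (f u : ℕ) + f v + 2 ≤ k + 1
    exact ⟨fun h => ⟨h, by have := hf u v h; omega⟩, And.left⟩

open Classical in
noncomputable def bipartiteLayer (X : Set V) (hk : 0 < k) (v : V) : Fin k :=
  if v ∈ X then ⟨0, hk⟩ else ⟨k - 1, by omega⟩

lemma bipartiteLayer_add_bipartiteLayer_of_adj (hdisj : Disjoint X Y)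
    (hbip : ∀ u v : V, G.Adj u v → (u ∈ X ∧ v ∈ Y) ∨ (u ∈ Y ∧ v ∈ X))
    (hk : 0 < k) {u v : V} (h : G.Adj u v) :
    (bipartiteLayer X hk u : ℕ) + bipartiteLayer X hk v + 1 ≤ k := by
  rcases hbip u v h with ⟨hu, hv⟩ | ⟨hu, hv⟩
  · simp only [bipartiteLayer, if_pos hu, if_neg (Set.disjoint_right.mp hdisj hv)]
    omega
  · simp only [bipartiteLayer, if_neg (Set.disjoint_right.mp hdisj hu), if_pos hv]
    omega

lemma compl_fset_union_eq_setOf_bipartiteLayer (hpart : ∀ v : V, v ∈ X ∨ v ∈ Y)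
    (hdisj : Disjoint X Y) (hk : 2 ≤ k) :
    (Fset X k ∪ {b : V × Fin k | b.1 ∈ Y ∧ b.2.val ≤ k - 2})ᶜ
      = {b | b.2 = bipartiteLayer X (zero_lt_two.trans_le hk) b.1} := by
  ext ⟨v, j⟩
  have hj := j.isLt
  by_cases hv : v ∈ X
  · have hvY : v ∉ Y := Set.disjoint_left.mp hdisj hv
    simp [Fset, bipartiteLayer, hv, hvY, Fin.ext_iff]
  · have hvY : v ∈ Y := (hpart v).resolve_left hv
    simp only [Fset, Set.compl_union, Set.mem_inter_iff, Set.mem_compl_iff, Set.mem_ofPred_eq,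
      hv, hvY, false_and, true_and, not_false_eq_true, not_le, bipartiteLayer, Fin.ext_iff,
      ↓reduceIte]
    omega

end GraphPower

/-- Let `G` be bipartite with parts `X`, `Y`, no isolated vertices, and `k ≥ 2`.
In `G_k`, the set `F = {x_{i,j} : x_i ∈ X, 2 ≤ j ≤ k}` is independent, its closed
neighborhood is `F ∪ {y_{i,j} : y_i ∈ Y, 1 ≤ j ≤ k-1}` (0-indexed: `j ≤ k-2`),
and `G_k` minus this closed neighborhood is isomorphic to `G`. -/
theorem stmt9 {V : Type*} (G : SimpleGraph V) (X Y : Set V)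
    (hpart : ∀ v : V, v ∈ X ∨ v ∈ Y) (hdisj : Disjoint X Y)
    (hbip : ∀ u v : V, G.Adj u v → (u ∈ X ∧ v ∈ Y) ∨ (u ∈ Y ∧ v ∈ X))
    (hiso : ∀ v : V, ∃ u, G.Adj v u)
    (k : ℕ) (hk : 2 ≤ k) :
    IsIndep (graphPower G k) (Fset X k) ∧
    closedNbhd (graphPower G k) (Fset X k)
      = Fset X k ∪ {b : V × Fin k | b.1 ∈ Y ∧ b.2.val ≤ k - 2} ∧
    Nonempty (((graphPower G k).induce
      (Fset X k ∪ {b : V × Fin k | b.1 ∈ Y ∧ b.2.val ≤ k - 2})ᶜ) ≃g G) := by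
  refine ⟨(isIndep_left hdisj hbip).graphPower_fset, closedNbhd_fset hdisj hbip hiso hk, ?_⟩
  rw [compl_fset_union_eq_setOf_bipartiteLayer hpart hdisj hk]
  exact ⟨graphPowerInduceGraphIso _
    fun _ _ h => bipartiteLayer_add_bipartiteLayer_of_adj hdisj hbip _ h⟩
end
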